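/- For any f in the polydisc algebra A whose complex partial derivatives up to order N lie in A, and whose range on cl(𝔻)^n omits 0, the reciprocal 1/f also has all complex partial derivatives up to order N in A; hence ∂^{-N}A is an inverse-closed (full) subalgebra of A. -/

import Mathlib

open scoped BigOperators

/-- The open unit polydisc `𝔻ⁿ ⊆ ℂⁿ`. -/
def openPolydisc (n : ℕ) : Set (Fin n → ℂ) := { z | ∀ j, ‖z j‖ < 1 }

/-- The closed unit polydisc `cl(𝔻)ⁿ ⊆ ℂⁿ`. -/
def closedPolydisc (n : ℕ) : Set (Fin n → ℂ) := { z | ∀ j, ‖z j‖ ≤ 1 }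

/-- Membership in the polydisc algebra `A`: continuous on the closed polydisc and
holomorphic on the open polydisc. -/
def MemA (n : ℕ) (f : (Fin n → ℂ) → ℂ) : Prop :=
  ContinuousOn f (closedPolydisc n) ∧ DifferentiableOn ℂ f (openPolydisc n)

/-- The complex partial derivative with respect to the `j`-th coordinate. -/
noncomputable def pd {n : ℕ} (j : Fin n) (f : (Fin n → ℂ) → ℂ) : (Fin n → ℂ) → ℂ :=
  fun z => fderiv ℂ f z (Pi.single j 1)

/-- The `m`-fold partial derivative with respect to the `j`-th coordinate. -/
noncomputable def pdPow {n : ℕ} (j : Fin n) : ℕ → ((Fin n → ℂ) → ℂ) → ((Fin n → ℂ) → ℂ)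
  | 0 => id
  | m + 1 => fun f => pd j (pdPow j m f)

/-- The mixed partial derivative `∂^{α₁+⋯+αₙ} f / ∂z₁^{α₁} ⋯ ∂zₙ^{αₙ}`. -/
noncomputable def pdMulti {n : ℕ} (α : Fin n → ℕ) (f : (Fin n → ℂ) → ℂ) :
    (Fin n → ℂ) → ℂ :=
  (List.finRange n).foldr (fun j g => pdPow j (α j) g) f

/-- Membership in `∂^{-N}A`: `f` lies in the polydisc algebra `A` and each of its
complex partial derivatives of total order at most `N` (computed on the open polydisc)
extends to a member of `A`. -/
def MemDN (n N : ℕ) (f : (Fin n → ℂ) → ℂ) : Prop :=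
  MemA n f ∧ ∀ α : Fin n → ℕ, (∑ j, α j) ≤ N →
    ∃ g, MemA n g ∧ ∀ z ∈ openPolydisc n, g z = pdMulti α f z

/-!
`PartialsExtendToA n k h` asks that `h` and all its iterated partial derivatives of order at
most `k`, taken in every order, agree on the open polydisc with members of `A`. By the Leibniz
rule this class is closed under products, and by `∂ⱼ(1/f) = -(1/f)² ∂ⱼf` and induction on `k`
it is closed under inverting a member of `A` that is zero-free on the closed polydisc.
`MemDN` only controls the derivatives taken in one fixed order; but the derivatives of lower
order are holomorphic on the open polydisc, so by Schwarz's theorem the coordinates can be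
rearranged into that order. Hence `MemDN n N f ↔ MemA n f ∧ PartialsExtendToA n N f`.
-/

open Filter Set Topology

variable {n : ℕ}

lemma isOpen_openPolydisc (n : ℕ) : IsOpen (openPolydisc n) := by
  simpa only [openPolydisc, ofPred_forall] using
    isOpen_iInter_of_finite fun j => isOpen_lt (continuous_apply j).norm continuous_const

lemma openPolydisc_subset_closedPolydisc (n : ℕ) : openPolydisc n ⊆ closedPolydisc n :=
  fun _ hz j => (hz j).le

lemma pd_congr_of_eventuallyEq {h₁ h₂ : (Fin n → ℂ) → ℂ} {z : Fin n → ℂ}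
    (hEq : h₁ =ᶠ[𝓝 z] h₂) (j : Fin n) : pd j h₁ z = pd j h₂ z := by
  simp only [pd, hEq.fderiv_eq]

lemma pd_eqOn {U : Set (Fin n → ℂ)} (hU : IsOpen U) {h₁ h₂ : (Fin n → ℂ) → ℂ}
    (hEq : EqOn h₁ h₂ U) (j : Fin n) : EqOn (pd j h₁) (pd j h₂) U :=
  fun _ hz => pd_congr_of_eventuallyEq (eventuallyEq_of_mem (hU.mem_nhds hz) hEq) j

lemma pd_const (j : Fin n) (c : ℂ) : pd j (fun _ => c) = fun _ => 0 := by
  ext; simp [pd]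

lemma pd_add {h₁ h₂ : (Fin n → ℂ) → ℂ} {z : Fin n → ℂ}
    (hd₁ : DifferentiableAt ℂ h₁ z) (hd₂ : DifferentiableAt ℂ h₂ z) (j : Fin n) :
    pd j (fun w => h₁ w + h₂ w) z = pd j h₁ z + pd j h₂ z := by
  simp [pd, fderiv_fun_add hd₁ hd₂]

lemma pd_mul {h₁ h₂ : (Fin n → ℂ) → ℂ} {z : Fin n → ℂ}
    (hd₁ : DifferentiableAt ℂ h₁ z) (hd₂ : DifferentiableAt ℂ h₂ z) (j : Fin n) :
    pd j (fun w => h₁ w * h₂ w) z = h₁ z * pd j h₂ z + h₂ z * pd j h₁ z := by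
  simp [pd, fderiv_fun_mul hd₁ hd₂]

lemma pd_inv {h : (Fin n → ℂ) → ℂ} {z : Fin n → ℂ} (hd : DifferentiableAt ℂ h z)
    (hz : h z ≠ 0) (j : Fin n) :
    pd j (fun w => (h w)⁻¹) z = -((h z)⁻¹ * (h z)⁻¹ * pd j h z) := by
  have hinv : HasFDerivAt (fun w => (h w)⁻¹) (-(h z ^ 2)⁻¹ • fderiv ℂ h z) z :=
    (hasDerivAt_inv hz).comp_hasFDerivAt z hd.hasFDerivAt
  rw [pd, hinv.fderiv]
  simp only [smul_apply, smul_eq_mul, pd]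
  ring

lemma fderiv_eq_sum_pd (h : (Fin n → ℂ) → ℂ) (z : Fin n → ℂ) :
    fderiv ℂ h z = ∑ k, pd k h z • ContinuousLinearMap.proj k := by
  ext v
  conv_lhs => rw [pi_eq_sum_univ' v, map_sum]
  simp [pd, mul_comm]

lemma pd_pd_eq_fderiv_fderiv {h : (Fin n → ℂ) → ℂ} {z : Fin n → ℂ}
    (hd : DifferentiableAt ℂ (fderiv ℂ h) z) (i j : Fin n) :
    pd i (pd j h) z = fderiv ℂ (fderiv ℂ h) z (Pi.single i 1) (Pi.single j 1) := by
  rw [pd, show pd j h = fun w => fderiv ℂ h w (Pi.single j 1) from rfl,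
    fderiv_clm_apply hd (differentiableAt_const _)]
  simp

/-- The first partials determine `fderiv ℂ h`, so their differentiability at `z` makes `h` twice
differentiable there. -/
lemma pd_comm {h : (Fin n → ℂ) → ℂ} {z : Fin n → ℂ}
    (hd : ∀ᶠ w in 𝓝 z, DifferentiableAt ℂ h w) (hd' : ∀ j, DifferentiableAt ℂ (pd j h) z)
    (i j : Fin n) : pd i (pd j h) z = pd j (pd i h) z := by
  have hd₂ : DifferentiableAt ℂ (fderiv ℂ h) z := by
    rw [funext (fderiv_eq_sum_pd h)]
    fun_prop
  rw [pd_pd_eq_fderiv_fderiv hd₂, pd_pd_eq_fderiv_fderiv hd₂]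
  exact second_derivative_symmetric_of_eventually
    (hd.mono fun w hw => hw.hasFDerivAt) hd₂.hasFDerivAt _ _

lemma memA_const (c : ℂ) : MemA n (fun _ => c) :=
  ⟨continuousOn_const, differentiableOn_const c⟩

lemma MemA.add {g₁ g₂ : (Fin n → ℂ) → ℂ} (hg₁ : MemA n g₁) (hg₂ : MemA n g₂) :
    MemA n (fun z => g₁ z + g₂ z) :=
  ⟨hg₁.1.add hg₂.1, hg₁.2.add hg₂.2⟩

lemma MemA.mul {g₁ g₂ : (Fin n → ℂ) → ℂ} (hg₁ : MemA n g₁) (hg₂ : MemA n g₂) :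
    MemA n (fun z => g₁ z * g₂ z) :=
  ⟨hg₁.1.mul hg₂.1, hg₁.2.mul hg₂.2⟩

lemma MemA.inv {g : (Fin n → ℂ) → ℂ} (hg : MemA n g) (hne : ∀ z ∈ closedPolydisc n, g z ≠ 0) :
    MemA n (fun z => (g z)⁻¹) :=
  ⟨hg.1.inv₀ hne, hg.2.inv fun z hz => hne z (openPolydisc_subset_closedPolydisc n hz)⟩

def ExtendsToA (n : ℕ) (h : (Fin n → ℂ) → ℂ) : Prop :=
  ∃ g, MemA n g ∧ EqOn g h (openPolydisc n)

namespace ExtendsToA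

variable {h h₁ h₂ : (Fin n → ℂ) → ℂ}

lemma _root_.MemA.extendsToA (hh : MemA n h) : ExtendsToA n h := ⟨h, hh, eqOn_refl _ _⟩

lemma congr (hh : ExtendsToA n h₁) (hEq : EqOn h₁ h₂ (openPolydisc n)) : ExtendsToA n h₂ :=
  let ⟨g, hg, hgh⟩ := hh
  ⟨g, hg, hgh.trans hEq⟩

lemma differentiableOn (hh : ExtendsToA n h) : DifferentiableOn ℂ h (openPolydisc n) :=
  let ⟨_, hg, hgh⟩ := hh
  hg.2.congr hgh.symm

lemma differentiableAt (hh : ExtendsToA n h) {z : Fin n → ℂ} (hz : z ∈ openPolydisc n) :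
    DifferentiableAt ℂ h z :=
  hh.differentiableOn.differentiableAt ((isOpen_openPolydisc n).mem_nhds hz)

lemma add (hh₁ : ExtendsToA n h₁) (hh₂ : ExtendsToA n h₂) :
    ExtendsToA n (fun z => h₁ z + h₂ z) :=
  let ⟨_, hg₁, hgh₁⟩ := hh₁
  let ⟨_, hg₂, hgh₂⟩ := hh₂
  ⟨_, hg₁.add hg₂, fun z hz => by simp only [hgh₁ hz, hgh₂ hz]⟩

lemma mul (hh₁ : ExtendsToA n h₁) (hh₂ : ExtendsToA n h₂) :
    ExtendsToA n (fun z => h₁ z * h₂ z) :=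
  let ⟨_, hg₁, hgh₁⟩ := hh₁
  let ⟨_, hg₂, hgh₂⟩ := hh₂
  ⟨_, hg₁.mul hg₂, fun z hz => by simp only [hgh₁ hz, hgh₂ hz]⟩

end ExtendsToA

def PartialsExtendToA (n : ℕ) : ℕ → ((Fin n → ℂ) → ℂ) → Prop
  | 0, h => ExtendsToA n h
  | k + 1, h => ExtendsToA n h ∧ ∀ j, PartialsExtendToA n k (pd j h)

namespace PartialsExtendToA

lemma extendsToA : ∀ {k} {h : (Fin n → ℂ) → ℂ}, PartialsExtendToA n k h → ExtendsToA n h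
  | 0, _, hh => hh
  | _ + 1, _, hh => hh.1

lemma of_succ : ∀ {k} {h : (Fin n → ℂ) → ℂ}, PartialsExtendToA n (k + 1) h →
    PartialsExtendToA n k h
  | 0, _, hh => hh.1
  | _ + 1, _, hh => ⟨hh.1, fun j => (hh.2 j).of_succ⟩

lemma congr : ∀ {k} {h₁ h₂ : (Fin n → ℂ) → ℂ}, PartialsExtendToA n k h₁ →
    EqOn h₁ h₂ (openPolydisc n) → PartialsExtendToA n k h₂
  | 0, _, _, hh, hEq => ExtendsToA.congr hh hEq
  | _ + 1, _, _, hh, hEq =>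
    ⟨hh.1.congr hEq, fun j => (hh.2 j).congr (pd_eqOn (isOpen_openPolydisc n) hEq j)⟩

lemma const : ∀ (k : ℕ) (c : ℂ), PartialsExtendToA n k (fun _ => c)
  | 0, c => (memA_const c).extendsToA
  | k + 1, c => ⟨(memA_const c).extendsToA, fun j => pd_const j c ▸ const k 0⟩

lemma add : ∀ {k} {h₁ h₂ : (Fin n → ℂ) → ℂ}, PartialsExtendToA n k h₁ →
    PartialsExtendToA n k h₂ → PartialsExtendToA n k (fun z => h₁ z + h₂ z)
  | 0, _, _, hh₁, hh₂ => ExtendsToA.add hh₁ hh₂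
  | _ + 1, _, _, hh₁, hh₂ =>
    ⟨hh₁.1.add hh₂.1, fun j => ((hh₁.2 j).add (hh₂.2 j)).congr fun _ hz =>
      (pd_add (hh₁.1.differentiableAt hz) (hh₂.1.differentiableAt hz) j).symm⟩

lemma mul : ∀ {k} {h₁ h₂ : (Fin n → ℂ) → ℂ}, PartialsExtendToA n k h₁ →
    PartialsExtendToA n k h₂ → PartialsExtendToA n k (fun z => h₁ z * h₂ z)
  | 0, _, _, hh₁, hh₂ => ExtendsToA.mul hh₁ hh₂
  | _ + 1, _, _, hh₁, hh₂ =>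
    ⟨hh₁.1.mul hh₂.1, fun j => (hh₁.of_succ.mul (hh₂.2 j) |>.add
      (hh₂.of_succ.mul (hh₁.2 j))).congr fun _ hz =>
      (pd_mul (hh₁.1.differentiableAt hz) (hh₂.1.differentiableAt hz) j).symm⟩

lemma inv {f : (Fin n → ℂ) → ℂ} (hf : MemA n f) (hne : ∀ z ∈ closedPolydisc n, f z ≠ 0) :
    ∀ {k}, PartialsExtendToA n k f → PartialsExtendToA n k (fun z => (f z)⁻¹)
  | 0, _ => (hf.inv hne).extendsToA
  | _ + 1, hh =>
    have ih := inv hf hne hh.of_succ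
    ⟨(hf.inv hne).extendsToA, fun j => (const _ (-1) |>.mul (ih.mul ih) |>.mul (hh.2 j)).congr
      fun z hz => by
        rw [pd_inv (hh.1.differentiableAt hz)
          (hne z (openPolydisc_subset_closedPolydisc n hz))]
        ring⟩

end PartialsExtendToA

noncomputable def pdList (l : List (Fin n)) (h : (Fin n → ℂ) → ℂ) : (Fin n → ℂ) → ℂ :=
  l.foldr pd h

@[simp] lemma pdList_nil (h : (Fin n → ℂ) → ℂ) : pdList [] h = h := rfl

@[simp] lemma pdList_cons (j : Fin n) (l : List (Fin n)) (h : (Fin n → ℂ) → ℂ) :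
    pdList (j :: l) h = pd j (pdList l h) := rfl

lemma pdList_append (l₁ l₂ : List (Fin n)) (h : (Fin n → ℂ) → ℂ) :
    pdList (l₁ ++ l₂) h = pdList l₁ (pdList l₂ h) :=
  List.foldr_append

lemma partialsExtendToA_iff {k : ℕ} {h : (Fin n → ℂ) → ℂ} :
    PartialsExtendToA n k h ↔ ∀ l : List (Fin n), l.length ≤ k → ExtendsToA n (pdList l h) := by
  induction k generalizing h with
  | zero =>
    refine ⟨fun hh l hl => ?_, fun H => H [] le_rfl⟩
    rwa [List.eq_nil_of_length_eq_zero (Nat.le_zero.1 hl)]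
  | succ k ih =>
    simp only [PartialsExtendToA, ih]
    constructor
    · rintro ⟨hh, hpd⟩ l hl
      rcases l.eq_nil_or_concat' with rfl | ⟨l', j, rfl⟩
      · exact hh
      · rw [pdList_append]
        exact hpd j l' (by simpa using hl)
    · intro H
      refine ⟨H [] (Nat.zero_le _), fun j l hl => ?_⟩
      simpa [pdList_append] using H (l ++ [j]) (by simpa using hl)

def multiIndexList (α : Fin n → ℕ) : List (Fin n) :=
  (List.finRange n).flatMap fun i => List.replicate (α i) i

lemma pdPow_eq_pdList (j : Fin n) (m : ℕ) (h : (Fin n → ℂ) → ℂ) :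
    pdPow j m h = pdList (List.replicate m j) h := by
  induction m with
  | zero => rfl
  | succ m ih => rw [List.replicate_succ, pdList_cons, ← ih]; rfl

lemma pdMulti_eq_pdList (α : Fin n → ℕ) (h : (Fin n → ℂ) → ℂ) :
    pdMulti α h = pdList (multiIndexList α) h := by
  unfold pdMulti multiIndexList
  induction List.finRange n with
  | nil => rfl
  | cons i L ih => rw [List.foldr_cons, ih, List.flatMap_cons, pdList_append, pdPow_eq_pdList]

lemma count_multiIndexList (α : Fin n → ℕ) (j : Fin n) : (multiIndexList α).count j = α j := by
  simp [multiIndexList, List.count_flatMap, List.count_replicate, ← Fin.sum_univ_def]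

lemma length_multiIndexList (α : Fin n → ℕ) : (multiIndexList α).length = ∑ j, α j := by
  simp [multiIndexList, List.length_flatMap, ← Fin.sum_univ_def]

lemma sum_count_eq_length (l : List (Fin n)) : ∑ j, l.count j = l.length := by
  simpa using Multiset.sum_count_eq_card (s := Finset.univ) (m := (l : Multiset (Fin n))) (by simp)

lemma pdList_eqOn_of_perm {U : Set (Fin n → ℂ)} (hU : IsOpen U) {h : (Fin n → ℂ) → ℂ} {m : ℕ}
    (hd : ∀ l : List (Fin n), l.length < m → DifferentiableOn ℂ (pdList l h) U)
    {l₁ l₂ : List (Fin n)} (hp : l₁.Perm l₂) (hl : l₁.length ≤ m) :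
    EqOn (pdList l₁ h) (pdList l₂ h) U := by
  induction hp with
  | nil => exact eqOn_refl _ _
  | cons j _ ih => exact pd_eqOn hU (ih (by simp at hl; omega)) j
  | swap i j l =>
    intro z hz
    simp only [List.length_cons] at hl
    exact pd_comm (eventually_of_mem (hU.mem_nhds hz) fun w hw =>
        (hd l (by omega)).differentiableAt (hU.mem_nhds hw))
      (fun k => (hd (k :: l) (by simp; omega)).differentiableAt (hU.mem_nhds hz)) j i
  | trans p _ ih₁ ih₂ => exact (ih₁ hl).trans (ih₂ (p.length_eq ▸ hl))

lemma MemDN.extendsToA_pdList {N : ℕ} {f : (Fin n → ℂ) → ℂ} (hf : MemDN n N f)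
    (l : List (Fin n)) (hl : l.length ≤ N) : ExtendsToA n (pdList l f) := by
  induction hm : l.length using Nat.strong_induction_on generalizing l with
  | _ m ih =>
  have hd : ∀ l' : List (Fin n), l'.length < m →
      DifferentiableOn ℂ (pdList l' f) (openPolydisc n) :=
    fun l' hl' => (ih _ hl' l' (by omega) rfl).differentiableOn
  have hperm : l.Perm (multiIndexList fun j => l.count j) :=
    List.perm_iff_count.2 fun j => (count_multiIndexList (fun j => l.count j) j).symm
  obtain ⟨g, hg, hgf⟩ := hf.2 (fun j => l.count j) (by rw [sum_count_eq_length]; omega)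
  refine ⟨g, hg, fun z hz => ?_⟩
  rw [hgf z hz, pdMulti_eq_pdList,
    pdList_eqOn_of_perm (isOpen_openPolydisc n) hd hperm hm.le hz]

lemma memDN_iff {N : ℕ} {f : (Fin n → ℂ) → ℂ} :
    MemDN n N f ↔ MemA n f ∧ PartialsExtendToA n N f := by
  refine ⟨fun hf => ⟨hf.1, partialsExtendToA_iff.2 hf.extendsToA_pdList⟩,
    fun ⟨hf, hfN⟩ => ⟨hf, fun α hα => ?_⟩⟩
  obtain ⟨g, hg, hgf⟩ :=
    partialsExtendToA_iff.1 hfN (multiIndexList α) (by rwa [length_multiIndexList])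
  exact ⟨g, hg, fun z hz => by rw [hgf hz, pdMulti_eq_pdList]⟩

theorem memDN_inverse_closed_general (n N : ℕ)
    (f : (Fin n → ℂ) → ℂ) (hf : MemDN n N f)
    (hne : ∀ z ∈ closedPolydisc n, f z ≠ 0) :
    ∃ g, MemDN n N g ∧ ∀ z ∈ closedPolydisc n, g z = (f z)⁻¹ := by
  obtain ⟨hfA, hfN⟩ := memDN_iff.1 hf
  exact ⟨fun z => (f z)⁻¹, memDN_iff.2 ⟨hfA.inv hne, hfN.inv hfA hne⟩, fun _ _ => rfl⟩

/-- If `f` lies in the polydisc algebra with all complex partial derivatives up to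
order `N` in `A`, and the range of `f` on the closed polydisc omits `0`, then `1/f`
also has all complex partial derivatives up to order `N` in `A`: the algebra
`∂^{-N}A` is inverse closed in `A`. -/
theorem memDN_inverse_closed (n N : ℕ) (hN : 0 < N)
    (f : (Fin n → ℂ) → ℂ) (hf : MemDN n N f)
    (hne : ∀ z ∈ closedPolydisc n, f z ≠ 0) :
    ∃ g, MemDN n N g ∧ ∀ z ∈ closedPolydisc n, g z = (f z)⁻¹ :=
  memDN_inverse_closed_general n N f hf hne
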